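/- arXiv:1302.4229 — 7 statements merged into one kernel-verified Lean document; each statement's English description precedes it below -/
import Mathlib

section
/- Let K and Q be finite abstract simplicial complexes. Then the Euler characteristic of their disjunctive product satisfies χ(K ⊠ Q) = χ(K) + χ(Q) − χ(K)·χ(Q). -/
/-- The Euler characteristic of a finite abstract simplicial complex:
`χ(K) = Σ_{F ∈ K} (−1)^(|F|−1)`. -/
def eulerChar {V : Type*} [DecidableEq V] [Fintype V] (K : Finset (Finset V)) : ℤ :=
  ∑ F ∈ K, (-1 : ℤ) ^ (F.card - 1)

/-- `K` is an abstract simplicial complex with vertex set `V`: the empty set is not a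
face, every singleton is a face, and nonempty subsets of faces are faces. -/
def IsComplex {V : Type*} [DecidableEq V] [Fintype V] (K : Finset (Finset V)) : Prop :=
  (∅ ∉ K) ∧ (∀ v : V, {v} ∈ K) ∧ (∀ F ∈ K, ∀ F' ⊆ F, F'.Nonempty → F' ∈ K)

/-- The disjunctive product `K ⊠ Q`: a nonempty `F ⊆ V(K) × V(Q)` is a face iff
`π₁(F) ∈ K` or `π₂(F) ∈ Q`. -/
def disjProd {V W : Type*} [DecidableEq V] [DecidableEq W] [Fintype V] [Fintype W]
    (K : Finset (Finset V)) (Q : Finset (Finset W)) : Finset (Finset (V × W)) :=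
  Finset.univ.filter
    (fun F => F.Nonempty ∧ (F.image Prod.fst ∈ K ∨ F.image Prod.snd ∈ Q))


open Finset

section Aux

variable {V W : Type*} [DecidableEq V] [DecidableEq W] [Fintype V] [Fintype W]

private lemma filter_powerset_eq (A B : Finset V) (T : Finset W) (hBA : B ⊆ A) :
    ((A ×ˢ T).powerset.filter (fun F => F.image Prod.fst = B)) =
    ((B ×ˢ T).powerset.filter (fun F => F.image Prod.fst = B)) := by
  ext F
  simp only [mem_filter, mem_powerset]
  constructor
  · rintro ⟨hF, rfl⟩
    refine ⟨fun x hx => ?_, rfl⟩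
    exact mem_product.2 ⟨mem_image.2 ⟨x, hx, rfl⟩, (mem_product.1 (hF hx)).2⟩
  · rintro ⟨hF, rfl⟩
    exact ⟨hF.trans (product_subset_product hBA le_rfl), rfl⟩

private lemma sumA (T : Finset W) (hT : T.Nonempty) :
    ∀ A : Finset V, ∑ F ∈ (A ×ˢ T).powerset.filter (fun F => F.image Prod.fst = A),
      (-1 : ℤ) ^ F.card = (-1) ^ A.card := by
  intro A
  induction A using Finset.strongInduction with
  | _ A ih =>
  have key : ∑ B ∈ A.powerset,
      ∑ F ∈ ((A ×ˢ T).powerset.filter (fun F => F.image Prod.fst = B)), (-1:ℤ)^F.card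
      = ∑ F ∈ (A ×ˢ T).powerset, (-1:ℤ)^F.card := by
    apply Finset.sum_fiberwise_of_maps_to
    intro F hF
    rw [mem_powerset] at hF ⊢
    intro x hx
    obtain ⟨p, hp, rfl⟩ := mem_image.1 hx
    exact (mem_product.1 (hF hp)).1
  have hmem : A ∈ A.powerset := mem_powerset_self A
  rw [← Finset.add_sum_erase _ _ hmem] at key
  have hrest : ∑ B ∈ A.powerset.erase A,
      ∑ F ∈ ((A ×ˢ T).powerset.filter (fun F => F.image Prod.fst = B)), (-1:ℤ)^F.card
      = ∑ B ∈ A.powerset.erase A, (-1:ℤ)^B.card := by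
    apply Finset.sum_congr rfl
    intro B hB
    obtain ⟨hne, hsub⟩ := mem_erase.1 hB
    rw [mem_powerset] at hsub
    rw [filter_powerset_eq A B T hsub]
    exact ih B (Finset.ssubset_iff_subset_ne.2 ⟨hsub, hne⟩)
  rw [hrest] at key
  have h1 : ∑ B ∈ A.powerset.erase A, (-1:ℤ)^B.card
      = (if A = ∅ then 1 else 0) - (-1:ℤ)^A.card := by
    have := Finset.add_sum_erase _ (fun B : Finset V => (-1:ℤ)^B.card) hmem
    rw [Finset.sum_powerset_neg_one_pow_card] at this
    linarith
  have h2 : ∑ F ∈ (A ×ˢ T).powerset, (-1:ℤ)^F.card = if A = ∅ then 1 else 0 := by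
    rw [Finset.sum_powerset_neg_one_pow_card]
    congr 1
    simp [Finset.product_eq_empty, hT.ne_empty]
  rw [h1, h2] at key
  linarith

private lemma sumR0 (A : Finset V) (hA : A.Nonempty) :
    ∑ F ∈ univ.filter (fun F : Finset (V × W) =>
      F.image Prod.fst = A ∧ F.image Prod.snd = (∅ : Finset W)), (-1:ℤ)^F.card = 0 := by
  rw [Finset.filter_eq_empty_iff.2, Finset.sum_empty]
  rintro F - ⟨h1, h2⟩
  rw [Finset.image_eq_empty] at h2
  subst h2
  simp only [Finset.image_empty] at h1
  exact hA.ne_empty h1.symm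

private lemma sumR (A : Finset V) (hA : A.Nonempty) :
    ∀ B : Finset W, ∑ F ∈ univ.filter (fun F : Finset (V × W) =>
      F.image Prod.fst = A ∧ F.image Prod.snd = B), (-1:ℤ)^F.card
      = if B = ∅ then 0 else -(-1:ℤ)^(A.card + B.card) := by
  intro B
  induction B using Finset.strongInduction with
  | _ B ih =>
  by_cases hB : B = ∅
  · rw [if_pos hB, hB]
    exact sumR0 A hA
  rw [if_neg hB]
  have key : ∑ B' ∈ B.powerset,
      ∑ F ∈ univ.filter (fun F : Finset (V × W) =>
        F.image Prod.fst = A ∧ F.image Prod.snd = B'), (-1:ℤ)^F.card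
      = (-1:ℤ)^A.card := by
    have maps : ∀ F ∈ (A ×ˢ B).powerset.filter (fun F => F.image Prod.fst = A),
        F.image Prod.snd ∈ B.powerset := by
      intro F hF
      obtain ⟨hF1, -⟩ := mem_filter.1 hF
      rw [mem_powerset] at hF1 ⊢
      intro x hx
      obtain ⟨p, hp, rfl⟩ := mem_image.1 hx
      exact (mem_product.1 (hF1 hp)).2
    have := Finset.sum_fiberwise_of_maps_to maps (fun F => (-1:ℤ)^F.card)
    rw [sumA B (Finset.nonempty_iff_ne_empty.2 hB) A] at this
    rw [← this]
    apply Finset.sum_congr rfl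
    intro B' hB'
    rw [mem_powerset] at hB'
    congr 1
    ext F
    simp only [mem_filter, mem_powerset, mem_univ, true_and, and_assoc]
    constructor
    · rintro ⟨h1, h2⟩
      refine ⟨fun x hx => mem_product.2 ⟨?_, hB' ?_⟩, h1, h2⟩
      · rw [← h1]; exact mem_image.2 ⟨x, hx, rfl⟩
      · rw [← h2]; exact mem_image.2 ⟨x, hx, rfl⟩
    · rintro ⟨-, h1, h2⟩; exact ⟨h1, h2⟩
  have hmem : B ∈ B.powerset := mem_powerset_self B
  rw [← Finset.add_sum_erase _ _ hmem] at key
  have hrest : ∑ B' ∈ B.powerset.erase B,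
      ∑ F ∈ univ.filter (fun F : Finset (V × W) =>
        F.image Prod.fst = A ∧ F.image Prod.snd = B'), (-1:ℤ)^F.card
      = ∑ B' ∈ B.powerset.erase B,
        ((-(-1:ℤ)^A.card) * (-1:ℤ)^B'.card + (if B' = ∅ then (-1:ℤ)^A.card else 0)) := by
    apply Finset.sum_congr rfl
    intro B' hB'
    obtain ⟨hne, hsub⟩ := mem_erase.1 hB'
    rw [mem_powerset] at hsub
    rw [ih B' (Finset.ssubset_iff_subset_ne.2 ⟨hsub, hne⟩)]
    split_ifs with h
    · subst h; simp
    · rw [pow_add]; ring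
  rw [hrest, Finset.sum_add_distrib, ← Finset.mul_sum] at key
  have h1 : ∑ B' ∈ B.powerset.erase B, (-1:ℤ)^B'.card = -(-1:ℤ)^B.card := by
    have := Finset.add_sum_erase _ (fun B' : Finset W => (-1:ℤ)^B'.card) hmem
    rw [Finset.sum_powerset_neg_one_pow_card, if_neg hB] at this
    linarith
  have h2 : ∑ B' ∈ B.powerset.erase B, (if B' = ∅ then (-1:ℤ)^A.card else 0)
      = (-1:ℤ)^A.card := by
    rw [Finset.sum_ite_eq' (B.powerset.erase B) (∅ : Finset W)
      (fun _ => (-1:ℤ)^A.card), if_pos]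
    exact mem_erase.2 ⟨fun h => hB h.symm, empty_mem_powerset B⟩
  rw [h1, h2] at key
  rw [pow_add]
  linarith

private lemma sum_fst [Nonempty W] (K : Finset (Finset V)) :
    ∑ F ∈ univ.filter (fun F : Finset (V × W) => F.image Prod.fst ∈ K), (-1:ℤ)^F.card
      = ∑ A ∈ K, (-1:ℤ)^A.card := by
  rw [← Finset.sum_fiberwise_of_maps_to (g := fun F : Finset (V × W) => F.image Prod.fst)
      (t := K) (fun F hF => (mem_filter.1 hF).2) (fun F => (-1:ℤ)^F.card)]
  apply Finset.sum_congr rfl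
  intro A hA
  have hset : (univ.filter (fun F : Finset (V × W) => F.image Prod.fst ∈ K)).filter
      (fun F => F.image Prod.fst = A)
      = (A ×ˢ (univ : Finset W)).powerset.filter (fun F => F.image Prod.fst = A) := by
    ext F
    simp only [mem_filter, mem_univ, true_and, mem_powerset]
    constructor
    · rintro ⟨-, rfl⟩
      refine ⟨fun x hx => mem_product.2 ⟨?_, mem_univ _⟩, rfl⟩
      exact mem_image.2 ⟨x, hx, rfl⟩
    · rintro ⟨-, rfl⟩
      exact ⟨hA, rfl⟩
  rw [hset, sumA univ univ_nonempty A]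

private lemma sum_snd [Nonempty V] (Q : Finset (Finset W)) :
    ∑ F ∈ univ.filter (fun F : Finset (V × W) => F.image Prod.snd ∈ Q), (-1:ℤ)^F.card
      = ∑ B ∈ Q, (-1:ℤ)^B.card := by
  rw [← sum_fst (V := W) (W := V) Q]
  refine Finset.sum_nbij' (fun F => F.image Prod.swap) (fun G => G.image Prod.swap)
    ?_ ?_ ?_ ?_ ?_
  · intro F hF
    simp only [mem_filter, mem_univ, true_and] at hF ⊢
    rw [Finset.image_image]
    exact hF
  · intro G hG
    simp only [mem_filter, mem_univ, true_and] at hG ⊢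
    rw [Finset.image_image]
    exact hG
  · intro F _
    simp [Finset.image_image]
  · intro G _
    simp [Finset.image_image]
  · intro F _
    rw [Finset.card_image_of_injective F Prod.swap_injective]

private lemma sum_both (K : Finset (Finset V)) (Q : Finset (Finset W))
    (hK : ∅ ∉ K) (hQ : ∅ ∉ Q) :
    ∑ F ∈ univ.filter (fun F : Finset (V × W) =>
      F.image Prod.fst ∈ K ∧ F.image Prod.snd ∈ Q), (-1:ℤ)^F.card
      = -((∑ A ∈ K, (-1:ℤ)^A.card) * (∑ B ∈ Q, (-1:ℤ)^B.card)) := by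
  rw [← Finset.sum_fiberwise_of_maps_to (g := fun F : Finset (V × W) => F.image Prod.fst)
      (t := K) (fun F hF => (mem_filter.1 hF).2.1) (fun F => (-1:ℤ)^F.card)]
  have step : ∀ A ∈ K,
      ∑ F ∈ (univ.filter (fun F : Finset (V × W) =>
        F.image Prod.fst ∈ K ∧ F.image Prod.snd ∈ Q)).filter (fun F => F.image Prod.fst = A),
        (-1:ℤ)^F.card = -((-1:ℤ)^A.card * ∑ B ∈ Q, (-1:ℤ)^B.card) := by
    intro A hA
    have hA' : A.Nonempty := Finset.nonempty_iff_ne_empty.2 (fun h => hK (h ▸ hA))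
    have hset : (univ.filter (fun F : Finset (V × W) =>
        F.image Prod.fst ∈ K ∧ F.image Prod.snd ∈ Q)).filter (fun F => F.image Prod.fst = A)
        = univ.filter (fun F : Finset (V × W) =>
            F.image Prod.snd ∈ Q ∧ F.image Prod.fst = A) := by
      ext F
      simp only [mem_filter, mem_univ, true_and]
      constructor
      · rintro ⟨⟨-, h2⟩, rfl⟩; exact ⟨h2, rfl⟩
      · rintro ⟨h2, rfl⟩; exact ⟨⟨hA, h2⟩, rfl⟩
    rw [hset, ← Finset.sum_fiberwise_of_maps_to
        (g := fun F : Finset (V × W) => F.image Prod.snd)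
        (t := Q) (fun F hF => (mem_filter.1 hF).2.1) (fun F => (-1:ℤ)^F.card)]
    have step2 : ∀ B ∈ Q,
        ∑ F ∈ (univ.filter (fun F : Finset (V × W) =>
          F.image Prod.snd ∈ Q ∧ F.image Prod.fst = A)).filter (fun F => F.image Prod.snd = B),
          (-1:ℤ)^F.card = -((-1:ℤ)^A.card * (-1:ℤ)^B.card) := by
      intro B hB
      have hB' : B ≠ ∅ := fun h => hQ (h ▸ hB)
      have hset2 : (univ.filter (fun F : Finset (V × W) =>
          F.image Prod.snd ∈ Q ∧ F.image Prod.fst = A)).filter (fun F => F.image Prod.snd = B)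
          = univ.filter (fun F : Finset (V × W) =>
              F.image Prod.fst = A ∧ F.image Prod.snd = B) := by
        ext F
        simp only [mem_filter, mem_univ, true_and]
        constructor
        · rintro ⟨⟨-, h1⟩, rfl⟩; exact ⟨h1, rfl⟩
        · rintro ⟨h1, rfl⟩; exact ⟨⟨hB, h1⟩, rfl⟩
      rw [hset2, sumR A hA' B, if_neg hB', pow_add]
    rw [Finset.sum_congr rfl step2]
    rw [Finset.sum_neg_distrib, Finset.mul_sum]
  rw [Finset.sum_congr rfl step, Finset.sum_neg_distrib, ← Finset.sum_mul]

end Aux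

private lemma eulerChar_eq {V : Type*} [DecidableEq V] [Fintype V]
    (S : Finset (Finset V)) (h : ∀ F ∈ S, F ≠ ∅) :
    eulerChar S = -∑ F ∈ S, (-1:ℤ)^F.card := by
  rw [eulerChar, ← Finset.sum_neg_distrib]
  apply Finset.sum_congr rfl
  intro F hF
  have h1 : F.card - 1 + 1 = F.card :=
    Nat.succ_pred_eq_of_pos (Finset.card_pos.2 (Finset.nonempty_iff_ne_empty.2 (h F hF)))
  have h2 : (-1:ℤ)^F.card = (-1:ℤ)^(F.card-1) * (-1) := by
    rw [← pow_succ, h1]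
  rw [h2]; ring


/-- Euler characteristic of the disjunctive product:
`χ(K ⊠ Q) = χ(K) + χ(Q) − χ(K)·χ(Q)`. -/
theorem stmt5 {V W : Type*} [DecidableEq V] [DecidableEq W] [Fintype V] [Fintype W]
    [Nonempty V] [Nonempty W]
    (K : Finset (Finset V)) (Q : Finset (Finset W))
    (hK : IsComplex K) (hQ : IsComplex Q) :
    eulerChar (disjProd K Q) = eulerChar K + eulerChar Q - eulerChar K * eulerChar Q := by
  obtain ⟨hK0, -⟩ := hK
  obtain ⟨hQ0, -⟩ := hQ
  have hD : disjProd K Q = Finset.univ.filter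
      (fun F : Finset (V × W) => F.image Prod.fst ∈ K ∨ F.image Prod.snd ∈ Q) := by
    rw [disjProd]
    apply Finset.filter_congr
    intro F _
    constructor
    · rintro ⟨-, h⟩; exact h
    · intro h
      refine ⟨Finset.nonempty_iff_ne_empty.2 ?_, h⟩
      rintro rfl
      simp only [Finset.image_empty] at h
      rcases h with h | h
      · exact hK0 h
      · exact hQ0 h
  have hne : ∀ F ∈ Finset.univ.filter (fun F : Finset (V × W) =>
      F.image Prod.fst ∈ K ∨ F.image Prod.snd ∈ Q), F ≠ ∅ := by
    intro F hF
    rintro rfl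
    rcases (Finset.mem_filter.1 hF).2 with h | h <;> simp only [Finset.image_empty] at h
    exacts [hK0 h, hQ0 h]
  rw [hD, eulerChar_eq _ hne, Finset.filter_or]
  have hinter : (∑ F ∈ Finset.univ.filter (fun F : Finset (V × W) => F.image Prod.fst ∈ K)
        ∪ Finset.univ.filter (fun F : Finset (V × W) => F.image Prod.snd ∈ Q), (-1:ℤ)^F.card)
      + ∑ F ∈ Finset.univ.filter (fun F : Finset (V × W) => F.image Prod.fst ∈ K)
        ∩ Finset.univ.filter (fun F : Finset (V × W) => F.image Prod.snd ∈ Q), (-1:ℤ)^F.card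
      = (∑ F ∈ Finset.univ.filter (fun F : Finset (V × W) => F.image Prod.fst ∈ K), (-1:ℤ)^F.card)
      + ∑ F ∈ Finset.univ.filter (fun F : Finset (V × W) => F.image Prod.snd ∈ Q), (-1:ℤ)^F.card :=
    Finset.sum_union_inter
  rw [← Finset.filter_and, sum_fst K, sum_snd Q, sum_both K Q hK0 hQ0] at hinter
  have hxK : ∑ A ∈ K, (-1:ℤ)^A.card = -eulerChar K := by
    rw [eulerChar_eq K (fun A hA h => hK0 (h ▸ hA))]; ring
  have hyQ : ∑ B ∈ Q, (-1:ℤ)^B.card = -eulerChar Q := by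
    rw [eulerChar_eq Q (fun B hB h => hQ0 (h ▸ hB))]; ring
  rw [hxK, hyQ] at hinter
  linear_combination -hinter
end

section
/- Let K and Q be finite abstract simplicial complexes. Then the Euler characteristic of their simplicial product satisfies χ(K △ Q) = χ(K)·χ(Q). -/
/-- The simplicial product `K △ Q`: a nonempty `F ⊆ V(K) × V(Q)` is a face iff
`π₁(F) ∈ K` and `π₂(F) ∈ Q`. -/
def simpProd {V W : Type*} [DecidableEq V] [DecidableEq W] [Fintype V] [Fintype W]
    (K : Finset (Finset V)) (Q : Finset (Finset W)) : Finset (Finset (V × W)) :=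
  Finset.univ.filter
    (fun F => F.Nonempty ∧ (F.image Prod.fst ∈ K ∧ F.image Prod.snd ∈ Q))

open Finset

section ProjSurjSubsets

variable {V W : Type*} [DecidableEq V] [DecidableEq W]

def projSurjSubsets (A : Finset V) (B : Finset W) : Finset (Finset (V × W)) :=
  {F ∈ (A ×ˢ B).powerset | F.image Prod.fst = A ∧ F.image Prod.snd = B}

lemma sum_powerset_sdiff_neg_one_pow_card (A S : Finset V) :
    ∑ s ∈ (A \ S).powerset, (-1 : ℤ) ^ s.card = if A ⊆ S then 1 else 0 := by
  simp only [sum_powerset_neg_one_pow_card, sdiff_eq_empty_iff_subset]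

lemma sum_powerset_filter_not_superset_neg_one_pow_card {A : Finset V} (hA : A.Nonempty) :
    ∑ s ∈ A.powerset with ¬ A ⊆ s, (-1 : ℤ) ^ s.card = -(-1) ^ A.card := by
  have : {s ∈ A.powerset | ¬ A ⊆ s} = A.powerset.erase A := by
    ext s; simp only [mem_filter, mem_powerset, mem_erase]; grind [subset_antisymm]
  rw [this, sum_erase_eq_sub (mem_powerset_self A), sum_powerset_neg_one_pow_card_of_nonempty hA,
    zero_sub]

lemma sum_powerset_product_filter_neg_one_pow_card {A : Finset V} {B : Finset W}
    (hA : A.Nonempty) (hB : B.Nonempty) :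
    ∑ p ∈ A.powerset ×ˢ B.powerset with A ⊆ p.1 ∨ B ⊆ p.2, (-1 : ℤ) ^ p.1.card * (-1) ^ p.2.card
      = -(-1) ^ (A.card + B.card) := by
  have hall : ∑ p ∈ A.powerset ×ˢ B.powerset, (-1 : ℤ) ^ p.1.card * (-1) ^ p.2.card = 0 := by
    simp only [sum_product, ← sum_mul_sum]
    rw [sum_powerset_neg_one_pow_card_of_nonempty hA, zero_mul]
  have hneither : ∑ p ∈ A.powerset ×ˢ B.powerset with ¬A ⊆ p.1 ∧ ¬B ⊆ p.2,
      (-1 : ℤ) ^ p.1.card * (-1) ^ p.2.card = (-1) ^ (A.card + B.card) := by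
    rw [filter_product (fun s => ¬A ⊆ s) (fun t => ¬B ⊆ t)]
    simp only [sum_product, ← sum_mul_sum]
    rw [sum_powerset_filter_not_superset_neg_one_pow_card hA,
      sum_powerset_filter_not_superset_neg_one_pow_card hB, pow_add, neg_mul_neg]
  have hsplit := sum_filter_add_sum_filter_not (A.powerset ×ˢ B.powerset)
    (fun p => A ⊆ p.1 ∨ B ⊆ p.2) (fun p => (-1 : ℤ) ^ p.1.card * (-1) ^ p.2.card)
  simp only [not_or] at hsplit
  linarith

theorem sum_projSurjSubsets_neg_one_pow_card {A : Finset V} {B : Finset W}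
    (hA : A.Nonempty) (hB : B.Nonempty) :
    ∑ F ∈ projSurjSubsets A B, (-1 : ℤ) ^ F.card = -(-1) ^ (A.card + B.card) := by
  calc ∑ F ∈ projSurjSubsets A B, (-1 : ℤ) ^ F.card
      = ∑ F ∈ (A ×ˢ B).powerset, (-1 : ℤ) ^ F.card *
          ((∑ s ∈ (A \ F.image Prod.fst).powerset, (-1 : ℤ) ^ s.card) *
            ∑ t ∈ (B \ F.image Prod.snd).powerset, (-1 : ℤ) ^ t.card) := by
        rw [projSurjSubsets, sum_filter]
        refine sum_congr rfl fun F hF => ?_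
        have hFA := (image_subset_image (f := Prod.fst) (mem_powerset.1 hF)).trans
          subset_product_image_fst
        have hFB := (image_subset_image (f := Prod.snd) (mem_powerset.1 hF)).trans
          subset_product_image_snd
        rw [sum_powerset_sdiff_neg_one_pow_card, sum_powerset_sdiff_neg_one_pow_card,
          ite_zero_mul_ite_zero, one_mul, mul_ite, mul_one, mul_zero]
        simp only [subset_antisymm_iff, hFA, hFB, true_and]
    _ = ∑ F ∈ (A ×ˢ B).powerset,
          ∑ p ∈ (A \ F.image Prod.fst).powerset ×ˢ (B \ F.image Prod.snd).powerset,
            (-1 : ℤ) ^ F.card * ((-1) ^ p.1.card * (-1) ^ p.2.card) := by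
        refine sum_congr rfl fun F _ => ?_
        rw [sum_mul_sum, mul_sum, sum_product]
        simp only [mul_sum]
    _ = ∑ p ∈ A.powerset ×ˢ B.powerset, ∑ F ∈ ((A \ p.1) ×ˢ (B \ p.2)).powerset,
            (-1 : ℤ) ^ F.card * ((-1) ^ p.1.card * (-1) ^ p.2.card) := by
        refine sum_comm' fun F p => ?_
        simp only [mem_powerset, mem_product, subset_iff, mem_sdiff, mem_image]
        grind
    _ = ∑ p ∈ A.powerset ×ˢ B.powerset with A ⊆ p.1 ∨ B ⊆ p.2,
          (-1 : ℤ) ^ p.1.card * (-1) ^ p.2.card := by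
        simp only [← sum_mul, sum_powerset_neg_one_pow_card, product_eq_empty,
          sdiff_eq_empty_iff_subset, ite_mul, one_mul, zero_mul, sum_filter]
    _ = -(-1) ^ (A.card + B.card) := sum_powerset_product_filter_neg_one_pow_card hA hB

end ProjSurjSubsets

section EulerChar

variable {V W : Type*} [DecidableEq V] [DecidableEq W] [Fintype V] [Fintype W]

lemma eulerChar_eq_neg_sum {K : Finset (Finset V)} (hK : ∅ ∉ K) :
    eulerChar K = -∑ F ∈ K, (-1 : ℤ) ^ F.card := by
  rw [eulerChar, ← sum_neg_distrib]
  refine sum_congr rfl fun F hF => ?_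
  obtain ⟨n, hn⟩ := Nat.exists_eq_add_one_of_ne_zero
    (card_ne_zero.2 (nonempty_iff_ne_empty.2 (ne_of_mem_of_not_mem hF hK)))
  rw [hn, Nat.add_sub_cancel, pow_succ, mul_neg_one, neg_neg]

lemma empty_notMem_simpProd (K : Finset (Finset V)) (Q : Finset (Finset W)) :
    ∅ ∉ simpProd K Q := by
  simp [simpProd]

lemma filter_simpProd_eq_projSurjSubsets {K : Finset (Finset V)} {Q : Finset (Finset W)}
    (hK : ∅ ∉ K) {A : Finset V} {B : Finset W} (hA : A ∈ K) (hB : B ∈ Q) :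
    {F ∈ simpProd K Q | (F.image Prod.fst, F.image Prod.snd) = (A, B)} = projSurjSubsets A B := by
  ext F
  simp only [simpProd, projSurjSubsets, mem_filter, mem_univ, true_and, mem_powerset,
    Prod.mk.injEq]
  constructor
  · rintro ⟨-, rfl, rfl⟩
    exact ⟨subset_product, rfl, rfl⟩
  · rintro ⟨-, rfl, rfl⟩
    exact ⟨⟨image_nonempty.1 (nonempty_iff_ne_empty.2 (ne_of_mem_of_not_mem hA hK)), hA, hB⟩,
      rfl, rfl⟩

end EulerChar

/-- Euler characteristic of the simplicial product: `χ(K △ Q) = χ(K)·χ(Q)`. -/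
theorem stmt6 {V W : Type*} [DecidableEq V] [DecidableEq W] [Fintype V] [Fintype W]
    (K : Finset (Finset V)) (Q : Finset (Finset W))
    (hK : IsComplex K) (hQ : IsComplex Q) :
    eulerChar (simpProd K Q) = eulerChar K * eulerChar Q := by
  obtain ⟨hK₀, -, -⟩ := hK
  obtain ⟨hQ₀, -, -⟩ := hQ
  have hmaps : ∀ F ∈ simpProd K Q, (F.image Prod.fst, F.image Prod.snd) ∈ K ×ˢ Q := by
    intro F hF
    simp only [simpProd, mem_filter] at hF
    exact mem_product.2 hF.2.2
  calc eulerChar (simpProd K Q)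
      = -∑ p ∈ K ×ˢ Q, ∑ F ∈ projSurjSubsets p.1 p.2, (-1 : ℤ) ^ F.card := by
        rw [eulerChar_eq_neg_sum (empty_notMem_simpProd K Q),
          ← sum_fiberwise_of_maps_to hmaps]
        refine congrArg _ (sum_congr rfl fun p hp => ?_)
        rw [filter_simpProd_eq_projSurjSubsets hK₀ (mem_product.1 hp).1 (mem_product.1 hp).2]
    _ = ∑ p ∈ K ×ˢ Q, (-1 : ℤ) ^ p.1.card * (-1) ^ p.2.card := by
        rw [← sum_neg_distrib]
        refine sum_congr rfl fun p hp => ?_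
        obtain ⟨hA, hB⟩ := mem_product.1 hp
        rw [sum_projSurjSubsets_neg_one_pow_card
            (nonempty_iff_ne_empty.2 (ne_of_mem_of_not_mem hA hK₀))
            (nonempty_iff_ne_empty.2 (ne_of_mem_of_not_mem hB hQ₀)), neg_neg, pow_add]
    _ = eulerChar K * eulerChar Q := by
        rw [eulerChar_eq_neg_sum hK₀, eulerChar_eq_neg_sum hQ₀, neg_mul_neg, sum_mul_sum,
          sum_product]
end

section
/- Neumann's Lemma: Let K be an (additive, not necessarily abelian) group, H a subgroup, and (G_i)_{i∈I} a finite family of subgroups with cosets c_i + G_i. If a coset c + H is contained in the union ⋃_{i∈I} (c_i + G_i), then c + H is contained in ⋃_{i∈I₀} (c_i + G_i), where I₀ = {i ∈ I : [H : H ∩ G_i] is finite}. -/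
/-!
Translate everything into `H`: a coset `g • K` that meets `c • H`, pulled back along
`y ↦ c * y`, is a left coset of `K ⊓ H` in `H`. The cover of `c • H` thus becomes a cover of
the group `H` by finitely many cosets of its subgroups `K i ⊓ H`, and Neumann's lemma for
groups (`Subgroup.leftCoset_cover_filter_FiniteIndex`) discards those of infinite index.
-/

open scoped Pointwise

namespace Subgroup

variable {G : Type*} [Group G]

@[to_additive]
theorem mem_smul_subgroupOf_iff {H K : Subgroup G} {c g : G} {x : H}
    (hx : c * x ∈ g • (K : Set G)) (y : H) :
    y ∈ x • (K.subgroupOf H : Set H) ↔ c * y ∈ g • (K : Set G) := by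
  rw [mem_leftCoset_iff] at hx
  rw [mem_leftCoset_iff, mem_leftCoset_iff, SetLike.mem_coe, mem_subgroupOf]
  have hxy : ((x⁻¹ * y : H) : G) = (g⁻¹ * (c * x))⁻¹ * (g⁻¹ * (c * y)) := by
    simp [mul_assoc]
  rw [hxy]
  exact ⟨fun h => by simpa [mul_assoc] using K.mul_mem hx h,
    fun h => K.mul_mem (K.inv_mem hx) h⟩

@[to_additive]
theorem smul_subset_leftCoset_cover_filter_relIndex_ne_zero {ι : Type*} {s : Finset ι}
    {H : Subgroup G} {K : ι → Subgroup G} {c : G} {g : ι → G}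
    (hcov : c • (H : Set G) ⊆ ⋃ i ∈ s, g i • (K i : Set G)) :
    c • (H : Set G) ⊆ ⋃ i ∈ s.filter (fun i => (K i).relIndex H ≠ 0), g i • (K i : Set G) := by
  classical
  have hcov' : ∀ y : H, ∃ i ∈ s, c * y ∈ g i • (K i : Set G) := fun y => by
    simpa using hcov (Set.smul_mem_smul_set y.2)
  have hrep : ∀ i, ∃ x : H, (∃ y : H, c * y ∈ g i • (K i : Set G)) →
      c * x ∈ g i • (K i : Set G) := fun i => by
    by_cases h : ∃ y : H, c * y ∈ g i • (K i : Set G)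
    · exact h.imp fun _ hy _ => hy
    · exact ⟨1, fun h' => absurd h' h⟩
  choose x hx using hrep
  set t := s.filter (fun i => ∃ y : H, c * y ∈ g i • (K i : Set G))
  have htcov : ⋃ i ∈ t, x i • ((K i).subgroupOf H : Set H) = Set.univ := by
    refine Set.eq_univ_of_forall fun y => ?_
    obtain ⟨i, hi, hy⟩ := hcov' y
    exact Set.mem_biUnion (Finset.mem_filter.mpr ⟨hi, y, hy⟩)
      ((mem_smul_subgroupOf_iff (hx i ⟨y, hy⟩) y).mpr hy)
  rintro _ ⟨y, hy, rfl⟩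
  obtain ⟨i, hi, hyi⟩ := Set.mem_iUnion₂.mp
    ((leftCoset_cover_filter_FiniteIndex htcov).symm ▸ Set.mem_univ (⟨y, hy⟩ : H))
  obtain ⟨hit, hfin⟩ := Finset.mem_filter.mp hi
  obtain ⟨his, hne⟩ := Finset.mem_filter.mp hit
  exact Set.mem_biUnion (Finset.mem_filter.mpr ⟨his, hfin.index_ne_zero⟩)
    ((mem_smul_subgroupOf_iff (hx i hne) _).mp hyi)

end Subgroup

/-- Neumann's Lemma: if a coset `c + H` is covered by a finite union of cosets
`c_i + G_i`, then it is covered by just those `c_i + G_i` with `[H : H ∩ G_i]`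
finite (index `0` means infinite). -/
theorem stmt10 {K : Type*} [AddGroup K] {ι : Type*} (I : Finset ι)
    (H : AddSubgroup K) (G : ι → AddSubgroup K) (c : K) (cc : ι → K)
    (hcov : (c +ᵥ (H : Set K)) ⊆ ⋃ i ∈ I, (cc i +ᵥ ((G i : AddSubgroup K) : Set K))) :
    (c +ᵥ (H : Set K)) ⊆
      ⋃ i ∈ I.filter (fun i => (G i).relIndex H ≠ 0),
        (cc i +ᵥ ((G i : AddSubgroup K) : Set K)) :=
  AddSubgroup.vadd_subset_leftCoset_cover_filter_relIndex_ne_zero hcov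
end

section
/- Let K be a group, H a subgroup, and (G_i)_{i∈I} a finite family of subgroups such that [H : H ∩ G_i] is infinite or equal to 1 for every i. If a coset c + H is covered by a finite union ⋃_{i∈I}(c_i + G_i) of cosets of the G_i, then c + H ⊆ c_i + G_i for at least one i. -/
open scoped Pointwise

/-!
Pull the cover back to `H` along `h ↦ c + h`: the trace on `c + H` of a coset of `G_i` is empty
or a coset of `H ∩ G_i` in `H`, so `H` is covered by finitely many cosets of the subgroups
`H ∩ G_i` whose cosets meet `c + H`. By B. H. Neumann's lemma one of them has finite index in `H`,
hence, by hypothesis, index `1`; that is, `H ≤ G_i`, and then `c + H` lies in the coset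
`c_i + G_i` that it meets.
-/

namespace Subgroup

variable {G : Type*} [Group G]

@[to_additive]
theorem preimage_mul_left_smul_eq_smul_subgroupOf {H K : Subgroup G} {c g : G} {h : H}
    (hh : c * h ∈ g • (K : Set G)) :
    (fun x : H => c * x) ⁻¹' (g • (K : Set G)) =
      h • ((K.subgroupOf H : Subgroup H) : Set H) := by
  ext x
  rw [mem_leftCoset_iff] at hh
  have hx : g⁻¹ * (c * x) = g⁻¹ * (c * h) * (h⁻¹ * x : H) := by simp [mul_assoc]
  simp only [Set.mem_preimage, mem_leftCoset_iff, SetLike.mem_coe, mem_subgroupOf, hx]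
  exact K.mul_mem_cancel_left hh

@[to_additive]
theorem exists_relIndex_ne_zero_of_leftCoset_subset_biUnion {ι : Type*} {H : Subgroup G}
    {K : ι → Subgroup G} {c : G} {g : ι → G} {s : Finset ι}
    (hcovers : c • (H : Set G) ⊆ ⋃ i ∈ s, g i • (K i : Set G)) :
    ∃ i ∈ s, (K i).relIndex H ≠ 0 ∧ ∃ h ∈ H, c * h ∈ g i • (K i : Set G) := by
  classical
  set S := s.filter fun i => ∃ h : H, c * h ∈ g i • (K i : Set G)
  have hS : ∀ i ∈ S, ∃ h : H, c * h ∈ g i • (K i : Set G) :=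
    fun i hi => (Finset.mem_filter.mp hi).2
  choose! h hh using hS
  have hcoversH : ⋃ i ∈ S, h i • ((K i).subgroupOf H : Set H) = Set.univ := by
    refine Set.eq_univ_of_forall fun x => ?_
    obtain ⟨i, hi, hx⟩ := Set.mem_iUnion₂.mp (hcovers ⟨x, x.2, rfl⟩)
    have hiS : i ∈ S := Finset.mem_filter.mpr ⟨hi, x, hx⟩
    refine Set.mem_iUnion₂.mpr ⟨i, hiS, ?_⟩
    rw [← preimage_mul_left_smul_eq_smul_subgroupOf (hh i hiS)]
    exact hx
  obtain ⟨i, hiS, hfin⟩ := exists_finiteIndex_of_leftCoset_cover hcoversH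
  obtain ⟨hi, -⟩ := Finset.mem_filter.mp hiS
  exact ⟨i, hi, hfin.index_ne_zero, h i, (h i).2, hh i hiS⟩

@[to_additive]
theorem leftCoset_subset_leftCoset_of_le {H K : Subgroup G} (hHK : H ≤ K) {c g h : G}
    (hH : h ∈ H) (hh : c * h ∈ g • (K : Set G)) :
    c • (H : Set G) ⊆ g • (K : Set G) :=
  calc c • (H : Set G) ⊆ c • (K : Set G) := Set.smul_set_mono hHK
    _ = (c * h) • (K : Set G) := by rw [mul_smul, smul_coe_set (hHK hH)]
    _ = g • (K : Set G) := by
      rw [leftCoset_eq_iff]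
      rw [mem_leftCoset_iff] at hh
      simpa using K.inv_mem hh

end Subgroup

/-- Corollary of Neumann's Lemma under the condition that each index `[H : H ∩ G_i]`
is `1` or infinite (index `0` means infinite): if a coset `c + H` is covered by a
finite union of cosets `c_i + G_i`, then it is contained in one of them. -/
theorem stmt11 {K : Type*} [AddGroup K] {ι : Type*} (I : Finset ι)
    (H : AddSubgroup K) (G : ι → AddSubgroup K) (c : K) (cc : ι → K)
    (hind : ∀ i ∈ I, (G i).relIndex H = 1 ∨ (G i).relIndex H = 0)
    (hcov : (c +ᵥ (H : Set K)) ⊆ ⋃ i ∈ I, (cc i +ᵥ ((G i : AddSubgroup K) : Set K))) :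
    ∃ i ∈ I, (c +ᵥ (H : Set K)) ⊆ cc i +ᵥ ((G i : AddSubgroup K) : Set K) := by
  obtain ⟨i, hi, hfin, h, hH, hh⟩ :=
    AddSubgroup.exists_relIndex_ne_zero_of_leftCoset_subset_biUnion hcov
  have hHG : H ≤ G i := AddSubgroup.relIndex_eq_one.mp ((hind i hi).resolve_right hfin)
  exact ⟨i, hi, AddSubgroup.leftCoset_subset_leftCoset_of_le hHG hH hh⟩
end

section
/- Let M be an abelian group and L a family of subsets of M closed under finite intersections such that each element of L is either empty, a singleton, or a coset of a subgroup, and suppose that whenever A ∈ L is contained in a finite union of elements of L, it is contained in one of them. If α and β are finite antichains (under inclusion) of nonempty elements of L with ⋃α = ⋃β, then α = β. -/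
open scoped Pointwise

/-- Uniqueness of antichain representations of pp-convex sets: if `L` is a family of
subsets of an abelian group closed under intersection, each member being empty, a
singleton, or a coset of a subgroup, and such that a member contained in a finite union
of members is contained in one of them, then two finite antichains of nonempty members
with the same union are equal. -/
theorem stmt12 {M : Type*} [AddCommGroup M] (L : Set (Set M))
    (hinter : ∀ A ∈ L, ∀ B ∈ L, A ∩ B ∈ L)
    (hstruct : ∀ A ∈ L, A = ∅ ∨ (∃ a, A = {a}) ∨
      ∃ (a : M) (H : AddSubgroup M), A = a +ᵥ (H : Set M))
    (hcover : ∀ A ∈ L, ∀ F : Finset (Set M), ↑F ⊆ L → A ⊆ ⋃₀ ↑F → ∃ B ∈ F, A ⊆ B)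
    (α β : Finset (Set M)) (hα : ↑α ⊆ L) (hβ : ↑β ⊆ L)
    (hαne : ∀ A ∈ α, (A : Set M).Nonempty) (hβne : ∀ A ∈ β, (A : Set M).Nonempty)
    (hαac : IsAntichain (· ⊆ ·) (↑α : Set (Set M)))
    (hβac : IsAntichain (· ⊆ ·) (↑β : Set (Set M)))
    (hunion : ⋃₀ (↑α : Set (Set M)) = ⋃₀ (↑β : Set (Set M))) :
    α = β := by
  have key : ∀ (γ δ : Finset (Set M)), ↑γ ⊆ L → ↑δ ⊆ L →
      IsAntichain (· ⊆ ·) (↑γ : Set (Set M)) →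
      ⋃₀ (↑γ : Set (Set M)) = ⋃₀ (↑δ : Set (Set M)) → γ ⊆ δ := by
    intro γ δ hγ hδ hγac hu A hA
    have hAL : A ∈ L := hγ hA
    have hAsub : A ⊆ ⋃₀ (↑δ : Set (Set M)) := by
      rw [← hu]; exact Set.subset_sUnion_of_mem hA
    obtain ⟨B, hB, hAB⟩ := hcover A hAL δ hδ hAsub
    have hBL : B ∈ L := hδ hB
    have hBsub : B ⊆ ⋃₀ (↑γ : Set (Set M)) := by
      rw [hu]; exact Set.subset_sUnion_of_mem hB
    obtain ⟨A', hA', hBA'⟩ := hcover B hBL γ hγ hBsub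
    have hAA' : A = A' := by
      by_contra h
      exact hγac hA hA' h (hAB.trans hBA')
    have : A = B := le_antisymm hAB (hAA' ▸ hBA')
    exact this ▸ hB
  exact le_antisymm (key α β hα hβ hαac hunion) (key β α hβ hα hβac hunion.symm)
end

section
/- Let A be a subgroup of an abelian group, and let D₁, …, D_l be cosets of subgroups H₁, …, H_l of A, each of infinite index in A. Let B = A \ (D₁ ∪ … ∪ D_l). Then B + B − B = A, i.e., every element of A can be written as x + y − z with x, y, z ∈ B, and moreover B − B = A. -/
open scoped Pointwise

private lemma neumann_avoid {A : Type*} [AddCommGroup A] {ι : Type*} [Fintype ι]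
    (H : ι → AddSubgroup A) (g : ι → A) (h : ∀ i, (H i).index = 0) :
    ∃ a : A, ∀ i, a ∉ g i +ᵥ ((H i : AddSubgroup A) : Set A) := by
  by_contra hc
  push_neg at hc
  have hcov : ⋃ i ∈ (Finset.univ : Finset ι), g i +ᵥ ((H i : AddSubgroup A) : Set A)
      = Set.univ := by
    ext a
    simp only [Set.mem_iUnion, Finset.mem_univ, Set.mem_univ, iff_true, exists_prop, true_and]
    obtain ⟨i, hi⟩ := hc a
    exact ⟨i, hi⟩
  obtain ⟨k, -, hk⟩ := AddSubgroup.exists_finiteIndex_of_leftCoset_cover hcov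
  exact hk.index_ne_zero (h k)

/-- Let `A` be an abelian group and `D₁, …, D_l` cosets of subgroups `H₁, …, H_l` each
of infinite index (index `0`). If `B = A \ (D₁ ∪ … ∪ D_l)` then `B + B − B = A` and
`B − B = A`. -/
theorem stmt13 {A : Type*} [AddCommGroup A] (l : ℕ)
    (H : Fin l → AddSubgroup A) (d : Fin l → A)
    (hind : ∀ i, (H i).index = 0)
    (B : Set A) (hB : B = Set.univ \ ⋃ i, (d i +ᵥ ((H i : AddSubgroup A) : Set A))) :
    ({a : A | ∃ x ∈ B, ∃ y ∈ B, ∃ z ∈ B, a = x + y - z} = Set.univ) ∧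
    ({a : A | ∃ x ∈ B, ∃ y ∈ B, a = x - y} = Set.univ) := by
  have hmemB : ∀ a : A, a ∈ B ↔ ∀ i, a ∉ d i +ᵥ ((H i : AddSubgroup A) : Set A) := by
    intro a
    simp [hB, Set.mem_diff, Set.mem_iUnion]
  -- B is nonempty
  obtain ⟨z, hz⟩ := neumann_avoid H d hind
  have hzB : z ∈ B := (hmemB z).2 hz
  constructor
  · -- B + B - B = univ
    ext a
    simp only [Set.mem_setOf_eq, Set.mem_univ, iff_true]
    -- Find y with y ∈ B and (a + z) - y ∈ B, using 2l cosets.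
    obtain ⟨y, hy⟩ := neumann_avoid (Sum.elim H H)
      (Sum.elim d (fun i => a + z - d i)) (fun i => by cases i <;> exact hind _)
    have hyB : y ∈ B := (hmemB y).2 fun i => hy (Sum.inl i)
    have hxB : a + z - y ∈ B := by
      rw [hmemB]
      intro i hmem
      apply hy (Sum.inr i)
      obtain ⟨h, hh, hhe⟩ := hmem
      refine ⟨-h, neg_mem hh, ?_⟩
      simp only [Sum.elim_inr, vadd_eq_add] at *
      have hy2 : y = a + z - (d i + h) := by rw [hhe]; abel
      rw [hy2]; abel
    exact ⟨a + z - y, hxB, y, hyB, z, hzB, by abel⟩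
  · -- B - B = univ
    ext a
    simp only [Set.mem_setOf_eq, Set.mem_univ, iff_true]
    obtain ⟨y, hy⟩ := neumann_avoid (Sum.elim H H)
      (Sum.elim d (fun i => d i - a)) (fun i => by cases i <;> exact hind _)
    have hyB : y ∈ B := (hmemB y).2 fun i => hy (Sum.inl i)
    have hxB : y + a ∈ B := by
      rw [hmemB]
      intro i hmem
      apply hy (Sum.inr i)
      obtain ⟨h, hh, hhe⟩ := hmem
      refine ⟨h, hh, ?_⟩
      simp only [Sum.elim_inr, vadd_eq_add] at *
      have hy2 : y = d i + h - a := by rw [hhe]; abel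
      rw [hy2]; abel
    exact ⟨y + a, hxB, y, hyB, by abel⟩
end

section
/- Let A be an abelian group, H₁, …, H_m subgroups of A each of infinite index in A, D_i a coset of H_i for each i, D = D₁ ∪ … ∪ D_m, and B = A \ D. Suppose f : B → N is an injective map into an abelian group N that is linear on B, meaning f(x + y − z) = f(x) + f(y) − f(z) whenever x, y, z, x + y − z ∈ B. Then there exists a unique injective map g : A → N extending f satisfying g(x + y − z) = g(x) + g(y) − g(z) for all x, y, z ∈ A. -/
open scoped Pointwise

lemma stmt15_avoid {A : Type*} [AddCommGroup A] {ι : Type*} [Fintype ι]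
    (K : ι → AddSubgroup A) (c : ι → A) (h : ∀ i, (K i).index = 0) :
    ∃ x : A, ∀ i, x ∉ c i +ᵥ ((K i : AddSubgroup A) : Set A) := by
  by_contra hc
  push_neg at hc
  have hcov : ⋃ i ∈ (Finset.univ : Finset ι), c i +ᵥ ((K i : AddSubgroup A) : Set A)
      = Set.univ := by
    ext x
    simp only [Set.mem_univ, iff_true, Set.mem_iUnion]
    obtain ⟨i, hi⟩ := hc x
    exact ⟨i, Finset.mem_univ i, hi⟩
  obtain ⟨k, -, hk⟩ := AddSubgroup.exists_finiteIndex_of_leftCoset_cover hcov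
  exact hk.index_ne_zero (h k)

/-- Unique extension of injective linear maps from a block to its pp-closure:
let `B = A \ (D₁ ∪ … ∪ D_m)` where each `D_i` is a coset of a subgroup `H_i` of
infinite index (index `0`). If `f : B → N` is injective on `B` and linear on `B`
(i.e. `f(x+y−z) = f(x)+f(y)−f(z)` whenever `x, y, z, x+y−z ∈ B`), then there is a
unique injective map `g : A → N` extending `f` with `g(x+y−z) = g(x)+g(y)−g(z)`
for all `x, y, z ∈ A`. -/
theorem stmt15 {A N : Type*} [AddCommGroup A] [AddCommGroup N] (m : ℕ)
    (H : Fin m → AddSubgroup A) (d : Fin m → A)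
    (hind : ∀ i, (H i).index = 0)
    (B : Set A) (hB : B = Set.univ \ ⋃ i, (d i +ᵥ ((H i : AddSubgroup A) : Set A)))
    (f : A → N)
    (hinj : Set.InjOn f B)
    (hlin : ∀ x y z : A, x ∈ B → y ∈ B → z ∈ B → x + y - z ∈ B →
      f (x + y - z) = f x + f y - f z) :
    ∃! g : A → N, (∀ x ∈ B, g x = f x) ∧ Function.Injective g ∧
      (∀ x y z : A, g (x + y - z) = g x + g y - g z) := by
  classical
  have memB : ∀ x : A, x ∈ B ↔ ∀ i, x ∉ d i +ᵥ ((H i : AddSubgroup A) : Set A) := by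
    intro x
    rw [hB]
    simp [Set.mem_diff, Set.mem_iUnion]
  -- generic picking lemma
  have pickGen : ∀ a b c : A, ∃ t : A, a + t ∈ B ∧ b + t ∈ B ∧ c + t ∈ B := by
    intro a b c
    obtain ⟨t, ht⟩ := stmt15_avoid (ι := Fin 3 × Fin m) (fun p => H p.2)
      (fun p => d p.2 - ![a, b, c] p.1) (fun p => hind p.2)
    have key : ∀ (u : A) (j : Fin 3), ![a,b,c] j = u →
        u + t ∈ B := by
      intro u j hj
      rw [memB]
      intro i hmem
      refine ht (j, i) ?_
      rw [Set.mem_vadd_set_iff_neg_vadd_mem] at hmem ⊢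
      rw [hj]
      convert hmem using 1
      simp only [vadd_eq_add]
      abel
    exact ⟨t, key a 0 rfl, key b 1 rfl, key c 2 rfl⟩
  have pick2 : ∀ a : A, ∃ t : A, t ∈ B ∧ a + t ∈ B := by
    intro a
    obtain ⟨t, ht0, -, hta⟩ := pickGen 0 0 a
    exact ⟨t, by simpa using ht0, hta⟩
  -- key well-definedness
  have key : ∀ b t t' : A, t ∈ B → b + t ∈ B → t' ∈ B → b + t' ∈ B →
      f (b + t) - f t = f (b + t') - f t' := by
    intro b t t' ht hbt ht' hbt'
    have h1 : (b + t') + t - t' = b + t := by abel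
    have := hlin (b + t') t t' hbt' ht ht' (h1 ▸ hbt)
    rw [h1] at this
    rw [this]; abel
  -- the difference function
  choose T hT1 hT2 using pick2
  set D : A → N := fun b => f (b + T b) - f (T b) with hD
  have Dspec : ∀ b t : A, t ∈ B → b + t ∈ B → D b = f (b + t) - f t := by
    intro b t ht hbt
    exact key b (T b) t (hT1 b) (hT2 b) ht hbt
  have Dadd : ∀ b c : A, D (b + c) = D b + D c := by
    intro b c
    obtain ⟨t, ht0, htc, htbc⟩ := pickGen 0 c (b + c)
    rw [zero_add] at ht0
    have h1 : D (b + c) = f (b + c + t) - f t := Dspec _ t ht0 htbc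
    have h2 : D c = f (c + t) - f t := Dspec _ t ht0 htc
    have h3 : D b = f (b + (c + t)) - f (c + t) := by
      refine Dspec _ (c + t) htc ?_
      rw [show b + (c + t) = b + c + t by abel]
      exact htbc
    rw [h1, h2, h3, show b + (c + t) = b + c + t by abel]
    abel
  have Dsub : ∀ b c : A, D (b - c) = D b - D c := by
    intro b c
    have := Dadd (b - c) c
    rw [sub_add_cancel] at this
    rw [this]; abel
  have Dzero : D 0 = 0 := by
    have := Dadd 0 0
    rw [add_zero] at this
    exact add_eq_left.mp this.symm
  -- fix a base point
  set e : A := T 0 with he_def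
  have he : e ∈ B := hT1 0
  set g : A → N := fun a => D (a - e) + f e with hg
  have hgB : ∀ x ∈ B, g x = f x := by
    intro x hx
    have : D (x - e) = f x - f e := by
      have h1 := Dspec (x - e) e he (by rwa [sub_add_cancel])
      rwa [sub_add_cancel] at h1
    simp only [hg, this]
    abel
  have hglin : ∀ x y z : A, g (x + y - z) = g x + g y - g z := by
    intro x y z
    simp only [hg]
    have h1 : x + y - z - e = (x - e) + (y - e) - (z - e) := by abel
    rw [h1, Dsub, Dadd]
    abel
  have hDinj : ∀ b : A, D b = 0 → b = 0 := by
    intro b hb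
    have h1 : D b = f (b + T b) - f (T b) := rfl
    rw [h1] at hb
    have h2 : f (b + T b) = f (T b) := by
      have := sub_eq_zero.mp hb
      exact this
    have h3 : b + T b = T b := hinj (hT2 b) (hT1 b) h2
    simpa using h3
  have hginj : Function.Injective g := by
    intro a a' haa
    simp only [hg, add_left_inj] at haa
    have h1 : D (a - a') = 0 := by
      have : a - a' = (a - e) - (a' - e) := by abel
      rw [this, Dsub, haa, sub_self]
    have := hDinj _ h1
    exact sub_eq_zero.mp this
  -- uniqueness helper
  have huniq : ∀ g' : A → N, ((∀ x ∈ B, g' x = f x) ∧ Function.Injective g' ∧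
      (∀ x y z : A, g' (x + y - z) = g' x + g' y - g' z)) → ∀ a : A,
      g' a = g a := by
    intro g' ⟨hext', _, hlin'⟩ a
    obtain ⟨t, hat, -, -⟩ := pickGen a a a
    obtain ⟨s, hs0, hts, -⟩ := pickGen 0 t t
    rw [zero_add] at hs0
    have hrepr : (a + t) + s - (t + s) = a := by abel
    have calc1 : ∀ g'' : A → N, (∀ x ∈ B, g'' x = f x) →
        (∀ x y z : A, g'' (x + y - z) = g'' x + g'' y - g'' z) →
        g'' a = f (a + t) + f s - f (t + s) := by
      intro g'' hext'' hlin''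
      have h0 : g'' a = g'' ((a + t) + s - (t + s)) := by rw [hrepr]
      rw [h0, hlin'' (a + t) s (t + s), hext'' _ hat, hext'' _ hs0, hext'' _ hts]
    rw [calc1 g' hext' hlin', calc1 g hgB hglin]
  exact ⟨g, ⟨hgB, hginj, hglin⟩, fun g' hg' => funext (huniq g' hg')⟩
end
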